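/- Let H_A, H_B be real inner product spaces, N ≥ 1, and L_1,…,L_N : H_A × H_B → ℝ differentiable with L_g-Lipschitz gradients; set L = (1/N)·Σ_i L_i and suppose L ≥ L* for some L* ∈ ℝ. Assume there is L > 0 such that for every fixed a the map b ↦ L(a,b) has an L-Lipschitz gradient and for every fixed b the map a ↦ L(a,b) has an L-Lipschitz gradient, and let 0 < η ≤ 1/L. Fix T, K ≥ 1 and, for t = 0,…,2KT−1, let the active block u_t be B when ⌊t/T⌋ is even and A when ⌊t/T⌋ is odd. Let x_iᵗ = (a_iᵗ, b_iᵗ) ∈ H_A × H_B be any client trajectories whose averages x̄ᵗ = (āᵗ, b̄ᵗ) satisfy, for all t: the active-block average moves by minus η times the averaged local partial gradient (b̄^{t+1} = b̄ᵗ − η·(1/N)Σ_i ∇_b L_i(a_iᵗ, b_iᵗ) and ā^{t+1} = āᵗ in a B-phase step, and symmetrically in an A-phase step), and whose consensus errors satisfy Σ_i ‖x_iᵗ − x̄ᵗ‖² ≤ ρ^{2t}·D₀ for some 0 ≤ ρ < 1 and D₀ ≥ 0. Define gₜ = ‖∇_b L(āᵗ, b̄ᵗ)‖² in a B-phase step and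 gₜ = ‖∇_a L(āᵗ, b̄ᵗ)‖² in an A-phase step. Then min_{0 ≤ t < 2KT} gₜ ≤ 2·(L(ā⁰, b̄⁰) − L*)/(η·2KT) + (L_g²·D₀)/(N·2KT·(1 − ρ²)). (Concrete form of Theorem 1: decentralized alternating LoRA convergence under geometrically decaying consensus error.) -/

import Mathlib

open scoped BigOperators
open scoped RealInnerProductSpace

lemma innerSL_inj' {E : Type*} [NormedAddCommGroup E] [InnerProductSpace ℝ E]
    {x y : E} (h : innerSL ℝ x = innerSL ℝ y) : x = y := by
  have h1 : ⟪x - y, x - y⟫ = 0 := by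
    have := congrArg (fun f : E →L[ℝ] ℝ => f (x - y)) h
    simp only [innerSL_apply_apply] at this
    rw [inner_sub_left, this, sub_self]
  simpa [sub_eq_zero] using inner_self_eq_zero.mp h1

lemma descent_lemma' {E : Type*} [NormedAddCommGroup E] [InnerProductSpace ℝ E]
    {f : E → ℝ} {G : E → E} {C : ℝ}
    (hd : ∀ x, HasFDerivAt f (innerSL ℝ (G x)) x)
    (hl : ∀ x y, ‖G x - G y‖ ≤ C * ‖x - y‖) (x y : E) :
    f y ≤ f x + ⟪G x, y - x⟫ + C / 2 * ‖y - x‖ ^ 2 := by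
  set v := y - x with hv
  have hline : ∀ t : ℝ, HasDerivAt (fun t : ℝ => x + t • v) v t := fun t => by
    simpa using ((hasDerivAt_id t).smul_const v).const_add x
  have hφ : ∀ t : ℝ, HasDerivAt (fun t : ℝ => f (x + t • v)) ⟪G (x + t • v), v⟫ t := by
    intro t
    have := (hd (x + t • v)).comp_hasDerivAt t (hline t)
    simpa [Function.comp_def] using this
  set c : ℝ := ⟪G x, v⟫ with hc
  set q : ℝ := C / 2 * ‖v‖ ^ 2 with hq
  have hψ : ∀ t : ℝ, HasDerivAt (fun t => f (x + t • v) - t * c - q * t ^ 2)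
      (⟪G (x + t • v), v⟫ - c - q * (2 * t)) t := by
    intro t
    have h2 : HasDerivAt (fun t : ℝ => q * t ^ 2) (q * (2 * t)) t := by
      simpa using (hasDerivAt_pow 2 t).const_mul q
    simpa using ((hφ t).fun_sub ((hasDerivAt_id t).mul_const c)).fun_sub h2
  have key : AntitoneOn (fun t => f (x + t • v) - t * c - q * t ^ 2) (Set.Icc 0 1) := by
    apply antitoneOn_of_deriv_nonpos (convex_Icc 0 1)
    · exact fun t _ => (hψ t).continuousAt.continuousWithinAt
    · exact fun t _ => (hψ t).differentiableAt.differentiableWithinAt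
    · intro t ht
      rw [interior_Icc] at ht
      rw [(hψ t).deriv]
      have h1 : ⟪G (x + t • v) - G x, v⟫ ≤ ‖G (x + t • v) - G x‖ * ‖v‖ :=
        real_inner_le_norm _ _
      have h2 : ‖G (x + t • v) - G x‖ ≤ C * (t * ‖v‖) := by
        simpa [norm_smul, abs_of_nonneg ht.1.le] using hl (x + t • v) x
      have h3 : ⟪G (x + t • v), v⟫ - c = ⟪G (x + t • v) - G x, v⟫ := by
        rw [hc, inner_sub_left]
      have h5 : ⟪G (x + t • v) - G x, v⟫ ≤ C * (t * ‖v‖) * ‖v‖ :=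
        h1.trans (mul_le_mul_of_nonneg_right h2 (norm_nonneg v))
      have h6 : q * (2 * t) = C * (t * ‖v‖) * ‖v‖ := by rw [hq]; ring
      linarith [h3, h5, h6]
  have h01 := key (Set.left_mem_Icc.mpr zero_le_one) (Set.right_mem_Icc.mpr zero_le_one)
      zero_le_one
  simp only [zero_smul, add_zero, zero_mul, sub_zero, one_smul, one_mul, one_pow, mul_one] at h01
  have hy : x + v = y := by rw [hv]; abel
  rw [hy] at h01
  rw [hq] at h01
  linarith

lemma step_bound' {E : Type*} [NormedAddCommGroup E] [InnerProductSpace ℝ E]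
    {f : E → ℝ} {G : E → E} {C η : ℝ} (hC : 0 < C)
    (hd : ∀ x, HasFDerivAt f (innerSL ℝ (G x)) x)
    (hl : ∀ x y, ‖G x - G y‖ ≤ C * ‖x - y‖)
    (hη0 : 0 < η) (hη : η ≤ 1 / C) (x g : E) :
    f (x - η • g) ≤ f x - η / 2 * ‖G x‖ ^ 2 + η / 2 * ‖g - G x‖ ^ 2 := by
  have h := descent_lemma' hd hl x (x - η • g)
  have h1 : x - η • g - x = -(η • g) := by abel
  rw [h1] at h
  have h2 : ⟪G x, -(η • g)⟫ = -(η * ⟪G x, g⟫) := by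
    rw [inner_neg_right, real_inner_smul_right]
  have h3 : ‖-(η • g)‖ ^ 2 = η ^ 2 * ‖g‖ ^ 2 := by
    rw [norm_neg, norm_smul, mul_pow, Real.norm_eq_abs, sq_abs]
  have h4 : ‖g - G x‖ ^ 2 = ‖g‖ ^ 2 - 2 * ⟪G x, g⟫ + ‖G x‖ ^ 2 := by
    rw [@norm_sub_sq_real, real_inner_comm]
  have h5 : η * C ≤ 1 := (le_div_iff₀ hC).mp hη
  nlinarith [mul_nonneg (mul_nonneg hη0.le (sq_nonneg ‖g‖)) (sub_nonneg.mpr h5)]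

lemma avg_norm_sq_le' {E : Type*} [NormedAddCommGroup E] [InnerProductSpace ℝ E]
    {N : ℕ} (hN : 1 ≤ N) (v : Fin N → E) :
    ‖(N : ℝ)⁻¹ • ∑ i, v i‖ ^ 2 ≤ (N : ℝ)⁻¹ * ∑ i, ‖v i‖ ^ 2 := by
  have hNpos : (0 : ℝ) < N := by exact_mod_cast hN
  have h1 : ‖∑ i, v i‖ ≤ ∑ i, ‖v i‖ := norm_sum_le _ _
  have h2 : (∑ i, ‖v i‖) ^ 2 ≤ (N : ℝ) * ∑ i, ‖v i‖ ^ 2 := by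
    simpa using sq_sum_le_card_mul_sum_sq (s := (Finset.univ : Finset (Fin N)))
      (f := fun i => ‖v i‖)
  have h3 : ‖∑ i, v i‖ ^ 2 ≤ (N : ℝ) * ∑ i, ‖v i‖ ^ 2 :=
    (pow_le_pow_left₀ (norm_nonneg _) h1 2).trans h2
  rw [norm_smul, Real.norm_eq_abs, abs_of_nonneg (by positivity), mul_pow]
  calc ((N : ℝ)⁻¹) ^ 2 * ‖∑ i, v i‖ ^ 2
      ≤ ((N : ℝ)⁻¹) ^ 2 * ((N : ℝ) * ∑ i, ‖v i‖ ^ 2) :=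
        mul_le_mul_of_nonneg_left h3 (by positivity)
    _ = (N : ℝ)⁻¹ * ∑ i, ‖v i‖ ^ 2 := by field_simp

lemma geom_sum_le_inv' {r : ℝ} (h0 : 0 ≤ r) (h1 : r < 1) (n : ℕ) :
    ∑ i ∈ Finset.range n, r ^ i ≤ (1 - r)⁻¹ := by
  have hr : 0 < 1 - r := by linarith
  induction n with
  | zero => simpa using (inv_nonneg.mpr hr.le)
  | succ n ih =>
    rw [Finset.sum_range_succ']
    have he : ∑ i ∈ Finset.range n, r ^ (i + 1) = r * ∑ i ∈ Finset.range n, r ^ i := by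
      rw [Finset.mul_sum]; exact Finset.sum_congr rfl fun i _ => by ring
    rw [he, pow_zero]
    have h2 : r * ∑ i ∈ Finset.range n, r ^ i ≤ r * (1 - r)⁻¹ :=
      mul_le_mul_of_nonneg_left ih h0
    have he2 : r * (1 - r)⁻¹ + 1 = (1 - r)⁻¹ := by field_simp; ring
    linarith

lemma partialB' {HA HB : Type*} [NormedAddCommGroup HA] [InnerProductSpace ℝ HA]
    [NormedAddCommGroup HB] [InnerProductSpace ℝ HB]
    (Li : HA → HB → ℝ) (GAv : HA) (GBv : HB) (a : HA) (b : HB)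
    (h : HasFDerivAt (fun p : HA × HB => Li p.1 p.2)
      ((innerSL ℝ GAv).comp (ContinuousLinearMap.fst ℝ HA HB) +
        (innerSL ℝ GBv).comp (ContinuousLinearMap.snd ℝ HA HB)) (a, b)) :
    HasFDerivAt (fun b' => Li a b') (innerSL ℝ GBv) b := by
  have hline : HasFDerivAt (fun b' : HB => ((a, b') : HA × HB))
      ((0 : HB →L[ℝ] HA).prod (ContinuousLinearMap.id ℝ HB)) b :=
    (hasFDerivAt_const a b).prodMk (hasFDerivAt_id b)
  have h2 := h.comp b hline
  refine HasFDerivAt.congr_fderiv (h2 : HasFDerivAt (fun b' => Li a b') _ b) ?_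
  ext v
  simp

lemma partialA' {HA HB : Type*} [NormedAddCommGroup HA] [InnerProductSpace ℝ HA]
    [NormedAddCommGroup HB] [InnerProductSpace ℝ HB]
    (Li : HA → HB → ℝ) (GAv : HA) (GBv : HB) (a : HA) (b : HB)
    (h : HasFDerivAt (fun p : HA × HB => Li p.1 p.2)
      ((innerSL ℝ GAv).comp (ContinuousLinearMap.fst ℝ HA HB) +
        (innerSL ℝ GBv).comp (ContinuousLinearMap.snd ℝ HA HB)) (a, b)) :
    HasFDerivAt (fun a' => Li a' b) (innerSL ℝ GAv) a := by
  have hline : HasFDerivAt (fun a' : HA => ((a', b) : HA × HB))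
      ((ContinuousLinearMap.id ℝ HA).prod (0 : HA →L[ℝ] HB)) a :=
    (hasFDerivAt_id a).prodMk (hasFDerivAt_const b a)
  have h2 := h.comp a hline
  refine HasFDerivAt.congr_fderiv (h2 : HasFDerivAt (fun a' => Li a' b) _ a) ?_
  ext v
  simp

lemma avg_grad_eq' {E : Type*} [NormedAddCommGroup E] [InnerProductSpace ℝ E]
    {N : ℕ} (c : ℝ) (G : Fin N → E) :
    innerSL ℝ (c • ∑ i, G i) = c • ∑ i, innerSL ℝ (G i) := by
  ext v
  simp [real_inner_smul_left, sum_inner]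

set_option maxHeartbeats 1000000 in
/-- Concrete form of Theorem 1 (decentralized alternating LoRA convergence).
Local losses `Li i : H_A × H_B → ℝ` have `Lg`-Lipschitz full gradients
`(GAi i, GBi i)` (ℓ² product norm); the averaged loss
`L(a,b) = (1/N)·Σᵢ Li i a b` is bounded below by `L*` and is block-wise
`Lsm`-smooth with partial gradients `GA`, `GB`, and `0 < η ≤ 1/Lsm`.  Along
client trajectories whose averages follow the alternating averaged-gradient
dynamics (active block `B` when `⌊t/T⌋` is even, `A` when odd) and whose
squared consensus errors decay geometrically as `ρ^(2t)·D₀` with `ρ < 1`, the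
minimal squared active-block gradient norm at the averaged iterates over `2KT`
steps obeys the stated bound. -/
theorem decentralized_alternating_convergence
    {HA HB : Type*} [NormedAddCommGroup HA] [InnerProductSpace ℝ HA]
    [NormedAddCommGroup HB] [InnerProductSpace ℝ HB]
    {N : ℕ} (hN : 1 ≤ N)
    (Li : Fin N → HA → HB → ℝ)
    (GAi : Fin N → HA → HB → HA) (GBi : Fin N → HA → HB → HB)
    (hderiv : ∀ i a b, HasFDerivAt (fun p : HA × HB => Li i p.1 p.2)
      ((innerSL ℝ (GAi i a b)).comp (ContinuousLinearMap.fst ℝ HA HB) +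
        (innerSL ℝ (GBi i a b)).comp (ContinuousLinearMap.snd ℝ HA HB)) (a, b))
    {Lg : ℝ} (hLg : 0 ≤ Lg)
    (hlip : ∀ i a b a' b',
      ‖GAi i a b - GAi i a' b'‖ ^ 2 + ‖GBi i a b - GBi i a' b'‖ ^ 2 ≤
        Lg ^ 2 * (‖a - a'‖ ^ 2 + ‖b - b'‖ ^ 2))
    (Lstar : ℝ) (hbdd : ∀ a b, Lstar ≤ (N : ℝ)⁻¹ * ∑ i, Li i a b)
    (GA : HA → HB → HA) (GB : HA → HB → HB)
    (hGA : ∀ a b, HasFDerivAt (fun a' => (N : ℝ)⁻¹ * ∑ i, Li i a' b)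
      (innerSL ℝ (GA a b)) a)
    (hGB : ∀ a b, HasFDerivAt (fun b' => (N : ℝ)⁻¹ * ∑ i, Li i a b')
      (innerSL ℝ (GB a b)) b)
    {Lsm : ℝ} (hLsm : 0 < Lsm)
    (hGAlip : ∀ b a a', ‖GA a b - GA a' b‖ ≤ Lsm * ‖a - a'‖)
    (hGBlip : ∀ a b b', ‖GB a b - GB a b'‖ ≤ Lsm * ‖b - b'‖)
    {η : ℝ} (hη0 : 0 < η) (hη : η ≤ 1 / Lsm)
    {T K : ℕ} (hT : 1 ≤ T) (hK : 1 ≤ K)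
    (a : ℕ → Fin N → HA) (b : ℕ → Fin N → HB)
    (abar : ℕ → HA) (bbar : ℕ → HB)
    (habar : ∀ t, abar t = (N : ℝ)⁻¹ • ∑ i, a t i)
    (hbbar : ∀ t, bbar t = (N : ℝ)⁻¹ • ∑ i, b t i)
    (hupd : ∀ t, if (t / T) % 2 = 0 then
        bbar (t + 1) = bbar t - η • ((N : ℝ)⁻¹ • ∑ i, GBi i (a t i) (b t i)) ∧
          abar (t + 1) = abar t
      else
        abar (t + 1) = abar t - η • ((N : ℝ)⁻¹ • ∑ i, GAi i (a t i) (b t i)) ∧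
          bbar (t + 1) = bbar t)
    {ρ : ℝ} (hρ0 : 0 ≤ ρ) (hρ1 : ρ < 1) {D0 : ℝ} (hD0 : 0 ≤ D0)
    (hcons : ∀ t, ∑ i, (‖a t i - abar t‖ ^ 2 + ‖b t i - bbar t‖ ^ 2) ≤
      ρ ^ (2 * t) * D0) :
    (Finset.range (2 * K * T)).inf'
        (Finset.nonempty_range_iff.mpr (by positivity))
        (fun t => if (t / T) % 2 = 0 then ‖GB (abar t) (bbar t)‖ ^ 2
          else ‖GA (abar t) (bbar t)‖ ^ 2) ≤
      2 * ((N : ℝ)⁻¹ * ∑ i, Li i (abar 0) (bbar 0) - Lstar) / (η * (2 * K * T)) +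
        Lg ^ 2 * D0 / (N * (2 * K * T) * (1 - ρ ^ 2)) := by
  have hNpos : (0 : ℝ) < N := by exact_mod_cast hN
  -- the averaged partial gradients agree with the averages of local partial gradients
  have hGBi : ∀ i a' b', HasFDerivAt (fun b'' => Li i a' b'')
      (innerSL ℝ (GBi i a' b')) b' := fun i a' b' =>
    partialB' (Li i) (GAi i a' b') (GBi i a' b') a' b' (hderiv i a' b')
  have hGAi : ∀ i a' b', HasFDerivAt (fun a'' => Li i a'' b')
      (innerSL ℝ (GAi i a' b')) a' := fun i a' b' =>
    partialA' (Li i) (GAi i a' b') (GBi i a' b') a' b' (hderiv i a' b')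
  have GBeq : ∀ a' b', GB a' b' = (N : ℝ)⁻¹ • ∑ i, GBi i a' b' := by
    intro a' b'
    refine innerSL_inj' ((hGB a' b').unique ?_)
    have hs : HasFDerivAt (fun b'' => ∑ i, Li i a' b'')
        (∑ i, innerSL ℝ (GBi i a' b')) b' :=
      HasFDerivAt.fun_sum (fun i _ => hGBi i a' b')
    have hm := hs.const_mul ((N : ℝ)⁻¹)
    rw [avg_grad_eq']
    exact hm
  have GAeq : ∀ a' b', GA a' b' = (N : ℝ)⁻¹ • ∑ i, GAi i a' b' := by
    intro a' b'
    refine innerSL_inj' ((hGA a' b').unique ?_)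
    have hs : HasFDerivAt (fun a'' => ∑ i, Li i a'' b')
        (∑ i, innerSL ℝ (GAi i a' b')) a' :=
      HasFDerivAt.fun_sum (fun i _ => hGAi i a' b')
    have hm := hs.const_mul ((N : ℝ)⁻¹)
    rw [avg_grad_eq']
    exact hm
  set Lb : ℕ → ℝ := fun t => (N : ℝ)⁻¹ * ∑ i, Li i (abar t) (bbar t) with hLbdef
  set gfun : ℕ → ℝ := fun t => if (t / T) % 2 = 0 then ‖GB (abar t) (bbar t)‖ ^ 2
      else ‖GA (abar t) (bbar t)‖ ^ 2 with hgdef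
  -- per-step descent inequality
  have key : ∀ t, Lb (t + 1) + η / 2 * gfun t ≤
      Lb t + η / 2 * (Lg ^ 2 * (ρ ^ (2 * t) * D0) / N) := by
    intro t
    by_cases h : (t / T) % 2 = 0
    · have hu := hupd t
      rw [if_pos h] at hu
      obtain ⟨hb, ha⟩ := hu
      have hg : gfun t = ‖GB (abar t) (bbar t)‖ ^ 2 := by
        rw [hgdef]; simp [h]
      have hstep := step_bound' (f := fun b' => (N : ℝ)⁻¹ * ∑ i, Li i (abar t) b')
          (G := fun b' => GB (abar t) b') hLsm (fun x => hGB (abar t) x)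
          (fun x y => hGBlip (abar t) x y) hη0 hη (bbar t)
          ((N : ℝ)⁻¹ • ∑ i, GBi i (a t i) (b t i))
      have herr : ‖((N : ℝ)⁻¹ • ∑ i, GBi i (a t i) (b t i)) - GB (abar t) (bbar t)‖ ^ 2
          ≤ Lg ^ 2 * (ρ ^ (2 * t) * D0) / N := by
        rw [GBeq (abar t) (bbar t), ← smul_sub, ← Finset.sum_sub_distrib]
        calc ‖(N : ℝ)⁻¹ • ∑ i, (GBi i (a t i) (b t i) - GBi i (abar t) (bbar t))‖ ^ 2
            ≤ (N : ℝ)⁻¹ * ∑ i, ‖GBi i (a t i) (b t i) - GBi i (abar t) (bbar t)‖ ^ 2 :=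
              avg_norm_sq_le' hN _
          _ ≤ (N : ℝ)⁻¹ * ∑ i, Lg ^ 2 * (‖a t i - abar t‖ ^ 2 + ‖b t i - bbar t‖ ^ 2) := by
              gcongr with i _
              have h1 := hlip i (a t i) (b t i) (abar t) (bbar t)
              have h2 := sq_nonneg ‖GAi i (a t i) (b t i) - GAi i (abar t) (bbar t)‖
              linarith
          _ = (N : ℝ)⁻¹ * (Lg ^ 2 * ∑ i, (‖a t i - abar t‖ ^ 2 + ‖b t i - bbar t‖ ^ 2)) := by
              congr 1
              rw [Finset.mul_sum]
          _ ≤ (N : ℝ)⁻¹ * (Lg ^ 2 * (ρ ^ (2 * t) * D0)) :=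
              mul_le_mul_of_nonneg_left
                (mul_le_mul_of_nonneg_left (hcons t) (sq_nonneg Lg)) (by positivity)
          _ = Lg ^ 2 * (ρ ^ (2 * t) * D0) / N := by
              rw [div_eq_mul_inv]; ring
      have hL1 : Lb (t + 1) = (N : ℝ)⁻¹ * ∑ i, Li i (abar t) (bbar (t + 1)) := by
        rw [hLbdef]; simp only [ha]
      rw [hL1, hb, hg]
      have hmul := mul_le_mul_of_nonneg_left herr (by positivity : (0 : ℝ) ≤ η / 2)
      have hLbt : Lb t = (N : ℝ)⁻¹ * ∑ i, Li i (abar t) (bbar t) := rfl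
      rw [hLbt]
      linarith [hstep]
    · have hu := hupd t
      rw [if_neg h] at hu
      obtain ⟨ha, hb⟩ := hu
      have hg : gfun t = ‖GA (abar t) (bbar t)‖ ^ 2 := by
        rw [hgdef]; simp [h]
      have hstep := step_bound' (f := fun a' => (N : ℝ)⁻¹ * ∑ i, Li i a' (bbar t))
          (G := fun a' => GA a' (bbar t)) hLsm (fun x => hGA x (bbar t))
          (fun x y => hGAlip (bbar t) x y) hη0 hη (abar t)
          ((N : ℝ)⁻¹ • ∑ i, GAi i (a t i) (b t i))
      have herr : ‖((N : ℝ)⁻¹ • ∑ i, GAi i (a t i) (b t i)) - GA (abar t) (bbar t)‖ ^ 2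
          ≤ Lg ^ 2 * (ρ ^ (2 * t) * D0) / N := by
        rw [GAeq (abar t) (bbar t), ← smul_sub, ← Finset.sum_sub_distrib]
        calc ‖(N : ℝ)⁻¹ • ∑ i, (GAi i (a t i) (b t i) - GAi i (abar t) (bbar t))‖ ^ 2
            ≤ (N : ℝ)⁻¹ * ∑ i, ‖GAi i (a t i) (b t i) - GAi i (abar t) (bbar t)‖ ^ 2 :=
              avg_norm_sq_le' hN _
          _ ≤ (N : ℝ)⁻¹ * ∑ i, Lg ^ 2 * (‖a t i - abar t‖ ^ 2 + ‖b t i - bbar t‖ ^ 2) := by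
              gcongr with i _
              have h1 := hlip i (a t i) (b t i) (abar t) (bbar t)
              have h2 := sq_nonneg ‖GBi i (a t i) (b t i) - GBi i (abar t) (bbar t)‖
              linarith
          _ = (N : ℝ)⁻¹ * (Lg ^ 2 * ∑ i, (‖a t i - abar t‖ ^ 2 + ‖b t i - bbar t‖ ^ 2)) := by
              congr 1
              rw [Finset.mul_sum]
          _ ≤ (N : ℝ)⁻¹ * (Lg ^ 2 * (ρ ^ (2 * t) * D0)) :=
              mul_le_mul_of_nonneg_left
                (mul_le_mul_of_nonneg_left (hcons t) (sq_nonneg Lg)) (by positivity)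
          _ = Lg ^ 2 * (ρ ^ (2 * t) * D0) / N := by
              rw [div_eq_mul_inv]; ring
      have hL1 : Lb (t + 1) = (N : ℝ)⁻¹ * ∑ i, Li i (abar (t + 1)) (bbar t) := by
        rw [hLbdef]; simp only [hb]
      rw [hL1, ha, hg]
      have hmul := mul_le_mul_of_nonneg_left herr (by positivity : (0 : ℝ) ≤ η / 2)
      have hLbt : Lb t = (N : ℝ)⁻¹ * ∑ i, Li i (abar t) (bbar t) := rfl
      rw [hLbt]
      linarith [hstep]
  -- telescoping
  have tele : ∀ m, Lb m + η / 2 * ∑ t ∈ Finset.range m, gfun t ≤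
      Lb 0 + η / 2 * (Lg ^ 2 * D0 / N) * ∑ t ∈ Finset.range m, (ρ ^ 2) ^ t := by
    intro m
    induction m with
    | zero => simp
    | succ m ih =>
      rw [Finset.sum_range_succ, Finset.sum_range_succ]
      have hk := key m
      rw [pow_mul] at hk
      have he : η / 2 * (Lg ^ 2 * ((ρ ^ 2) ^ m * D0) / ↑N) =
          η / 2 * (Lg ^ 2 * D0 / ↑N) * (ρ ^ 2) ^ m := by ring
      linarith [hk, ih, he]
  -- assemble
  set n := 2 * K * T with hndef
  have hnpos : 0 < n := by positivity
  have hnR : (0 : ℝ) < (n : ℝ) := by exact_mod_cast hnpos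
  set M := (Finset.range n).inf'
      (Finset.nonempty_range_iff.mpr (by positivity))
      gfun with hMdef
  have hsum : (n : ℝ) * M ≤ ∑ t ∈ Finset.range n, gfun t := by
    have h := Finset.card_nsmul_le_sum (Finset.range n) gfun M
        (fun t ht => Finset.inf'_le _ ht)
    rw [Finset.card_range, nsmul_eq_mul] at h
    exact h
  have hρ2 : ρ ^ 2 < 1 := by nlinarith
  have hρ2' : (0 : ℝ) < 1 - ρ ^ 2 := by linarith
  have hS : ∑ t ∈ Finset.range n, (ρ ^ 2) ^ t ≤ (1 - ρ ^ 2)⁻¹ :=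
    geom_sum_le_inv' (by positivity) hρ2 n
  have hLbn : Lstar ≤ Lb n := hbdd _ _
  have htel := tele n
  have hcoef : (0 : ℝ) ≤ η / 2 * (Lg ^ 2 * D0 / N) := by positivity
  have hmain : η / 2 * ((n : ℝ) * M) ≤ (Lb 0 - Lstar) +
      η / 2 * (Lg ^ 2 * D0 / N) * (1 - ρ ^ 2)⁻¹ := by
    have h1 : η / 2 * ((n : ℝ) * M) ≤ η / 2 * ∑ t ∈ Finset.range n, gfun t :=
      mul_le_mul_of_nonneg_left hsum (by positivity)
    have h2 : η / 2 * (Lg ^ 2 * D0 / N) * ∑ t ∈ Finset.range n, (ρ ^ 2) ^ t ≤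
        η / 2 * (Lg ^ 2 * D0 / N) * (1 - ρ ^ 2)⁻¹ :=
      mul_le_mul_of_nonneg_left hS hcoef
    linarith
  have hfinal : M ≤ (2 * (Lb 0 - Lstar) / η + Lg ^ 2 * D0 / (N * (1 - ρ ^ 2))) / (n : ℝ) := by
    rw [le_div_iff₀ hnR]
    have heq : η / 2 * (2 * (Lb 0 - Lstar) / η + Lg ^ 2 * D0 / (N * (1 - ρ ^ 2))) =
        (Lb 0 - Lstar) + η / 2 * (Lg ^ 2 * D0 / N) * (1 - ρ ^ 2)⁻¹ := by
      field_simp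
    have h2 : η / 2 * (M * (n : ℝ)) ≤
        η / 2 * (2 * (Lb 0 - Lstar) / η + Lg ^ 2 * D0 / (N * (1 - ρ ^ 2))) := by
      rw [heq]
      linarith [hmain]
    exact le_of_mul_le_mul_left h2 (by positivity : (0:ℝ) < η / 2)
  have hcast : ((n : ℕ) : ℝ) = 2 * (K : ℝ) * (T : ℝ) := by
    rw [hndef]; push_cast; ring
  have heq2 : (2 * (Lb 0 - Lstar) / η + Lg ^ 2 * D0 / (N * (1 - ρ ^ 2))) / (n : ℝ) =
      2 * (Lb 0 - Lstar) / (η * (n : ℝ)) + Lg ^ 2 * D0 / (N * (n : ℝ) * (1 - ρ ^ 2)) := by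
    field_simp
  rw [heq2, hcast] at hfinal
  exact hfinal
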